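/- For a connected graph X, Jac(X) ≅ Div₀(X)/Δ(Div(X)): the universal abelian group admitting a harmonic flow on X is isomorphic to the degree-zero divisors modulo the Laplacian image. -/

import Mathlib

/-- A multigraph in the dart model: a finite nonempty set of darts, an involution
reversing darts, and an incidence map assigning to each dart its initial vertex.
Semiedges (fixed darts), loops and parallel edges are allowed. -/
structure Multigraph where
  D : Type
  V : Type
  instFintypeD : Fintype D
  instDecEqD : DecidableEq D
  instNonemptyD : Nonempty D
  instFintypeV : Fintype V
  instDecEqV : DecidableEq V
  inv : D → D
  inv_inv : ∀ x, inv (inv x) = x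
  vtx : D → V
  vtx_surj : Function.Surjective vtx

attribute [instance] Multigraph.instFintypeD Multigraph.instDecEqD
  Multigraph.instNonemptyD Multigraph.instFintypeV Multigraph.instDecEqV

namespace Multigraph

variable (X : Multigraph)

/-- The darts emanating from a vertex. -/
def dartsAt (v : X.V) : Finset X.D := Finset.univ.filter (fun x => X.vtx x = v)

/-- One step along a dart belonging to the set `P` of allowed darts. -/
def step (P : Set X.D) (u v : X.V) : Prop :=
  ∃ x, x ∈ P ∧ X.vtx x = u ∧ X.vtx (X.inv x) = v

/-- Any two vertices are joined by a walk using only darts from `P`. -/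
def PreconnectedOn (P : Set X.D) : Prop :=
  ∀ u v : X.V, Relation.ReflTransGen (X.step P) u v

/-- A multigraph is connected if any two vertices are joined by a walk. -/
def Connected : Prop := X.PreconnectedOn Set.univ

/-- Number of edges in an inv-closed set of darts (semiedges count once). -/
def edgeCount (S : Finset X.D) : ℕ :=
  (S.card + (S.filter (fun x => X.inv x = x)).card) / 2

/-- A spanning tree: an inv-closed set of darts which connects all vertices and
has exactly `|V| - 1` edges. -/
def IsSpanningTree (S : Finset X.D) : Prop :=
  (∀ x ∈ S, X.inv x ∈ S) ∧ X.PreconnectedOn ↑S ∧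
    X.edgeCount S = Fintype.card X.V - 1

/-- The number of spanning trees. -/
noncomputable def tau : ℕ := Nat.card {S : Finset X.D // X.IsSpanningTree S}

/-- A simple graph: no loops, no semiedges, no parallel edges. -/
def Simple : Prop :=
  (∀ x, X.vtx x ≠ X.vtx (X.inv x)) ∧
  (∀ x y, X.vtx x = X.vtx y → X.vtx (X.inv x) = X.vtx (X.inv y) → x = y)

/-- `X` is at least `k`-edge-connected: removing fewer than `k` edges
leaves it connected. -/
def EdgeConnectedGE (k : ℕ) : Prop :=
  ∀ S : Finset X.D, (∀ x ∈ S, X.inv x ∈ S) → X.edgeCount S < k →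
    X.PreconnectedOn (↑S)ᶜ

/-- The automorphism group of a multigraph, as a subgroup of the permutations
of the darts: permutations commuting with the dart-reversing involution and
preserving the partition of darts into vertices. -/
def autGroup : Subgroup (Equiv.Perm X.D) where
  carrier := {f | (∀ x, f (X.inv x) = X.inv (f x)) ∧
    ∀ x y, X.vtx x = X.vtx y ↔ X.vtx (f x) = X.vtx (f y)}
  one_mem' := ⟨fun _ => rfl, fun _ _ => Iff.rfl⟩
  mul_mem' := by
    rintro f g ⟨hf1, hf2⟩ ⟨hg1, hg2⟩
    refine ⟨fun x => ?_, fun x y => ?_⟩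
    · simp [Equiv.Perm.mul_apply, hg1, hf1]
    · simp only [Equiv.Perm.mul_apply]
      exact (hg2 x y).trans (hf2 (g x) (g y))
  inv_mem' := by
    rintro f ⟨hf1, hf2⟩
    refine ⟨fun x => f.injective ?_, fun x y => ?_⟩
    · rw [(show ∀ y, f (f⁻¹ y) = y from f.apply_symm_apply), hf1, (show ∀ y, f (f⁻¹ y) = y from f.apply_symm_apply)]
    · have := hf2 (f⁻¹ x) (f⁻¹ y)
      simpa [show ∀ y, f (f⁻¹ y) = y from f.apply_symm_apply] using this.symm

end Multigraph

/-- A covering of multigraphs: a surjective graph homomorphism restricting to a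
bijection on the darts at each vertex. -/
structure Covering (X Y : Multigraph) where
  toFun : X.D → Y.D
  surj : Function.Surjective toFun
  map_inv : ∀ x, toFun (X.inv x) = Y.inv (toFun x)
  map_vtx : ∀ x y, X.vtx x = X.vtx y → Y.vtx (toFun x) = Y.vtx (toFun y)
  loc_inj : ∀ x y, X.vtx x = X.vtx y → toFun x = toFun y → x = y
  loc_surj : ∀ x z, Y.vtx z = Y.vtx (toFun x) →
    ∃ y, X.vtx y = X.vtx x ∧ toFun y = z

namespace Covering

variable {X Y : Multigraph} (ψ : Covering X Y)

/-- The covering is `n`-fold: every fibre has cardinality `n`. -/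
def IsNFold (n : ℕ) : Prop := ∀ z : Y.D, Nat.card {x : X.D // ψ.toFun x = z} = n

/-- The group of covering transformations: automorphisms `f` of `X`
with `ψ ∘ f = ψ`. -/
def CT : Subgroup (Equiv.Perm X.D) where
  carrier := {f | f ∈ X.autGroup ∧ ∀ x, ψ.toFun (f x) = ψ.toFun x}
  one_mem' := ⟨X.autGroup.one_mem, fun _ => rfl⟩
  mul_mem' := by
    rintro f g ⟨hf1, hf2⟩ ⟨hg1, hg2⟩
    exact ⟨X.autGroup.mul_mem hf1 hg1, fun x => by
      simp [Equiv.Perm.mul_apply, hf2, hg2]⟩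
  inv_mem' := by
    rintro f ⟨hf1, hf2⟩
    refine ⟨X.autGroup.inv_mem hf1, fun x => ?_⟩
    conv_rhs => rw [← (show f (f⁻¹ x) = x from f.apply_symm_apply x)]
    rw [hf2]

/-- The covering is regular: the covering transformations act transitively
(hence regularly) on every fibre. -/
def IsRegular : Prop :=
  ∀ x y, ψ.toFun x = ψ.toFun y → ∃ f ∈ ψ.CT, f x = y

end Covering
namespace Multigraph

variable (X : Multigraph)

/-- The family `c : Fin n → X.D` of darts is an oriented (simple) cycle:
consecutive darts are incident (cyclically) and the visited vertices are
pairwise distinct. A single semiedge or loop is a cycle. -/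
def IsCycleVec {n : ℕ} (hn : 0 < n) (c : Fin n → X.D) : Prop :=
  (∀ i : Fin n,
    X.vtx (X.inv (c i)) = X.vtx (c ⟨(i.1 + 1) % n, Nat.mod_lt _ hn⟩)) ∧
  Function.Injective fun i => X.vtx (c i)

/-- The defining relations of the Jacobian inside the free abelian group on
the darts: antisymmetry relations, vertex (Kirchhoff) relations and cycle
(Kirchhoff) relations. -/
def jacRels : Set (FreeAbelianGroup X.D) :=
  {a | ∃ x, a = FreeAbelianGroup.of x + FreeAbelianGroup.of (X.inv x)} ∪
  {a | ∃ v, a = ∑ x ∈ X.dartsAt v, FreeAbelianGroup.of x} ∪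
  {a | ∃ (n : ℕ) (hn : 0 < n) (c : Fin n → X.D), X.IsCycleVec hn c ∧
    a = ∑ i, FreeAbelianGroup.of (c i)}

/-- The Jacobian of a graph: the universal abelian group admitting a harmonic
flow on `X`, presented as the free abelian group on the darts modulo the
antisymmetry, vertex and cycle relations. -/
def jac : Type := FreeAbelianGroup X.D ⧸ AddSubgroup.closure X.jacRels

instance : AddCommGroup X.jac :=
  QuotientAddGroup.Quotient.addCommGroup (AddSubgroup.closure X.jacRels)

/-- The canonical harmonic `J`-flow `D(X) → Jac(X)`. -/
def jflow (x : X.D) : X.jac := QuotientAddGroup.mk (FreeAbelianGroup.of x)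

/-- A harmonic `A`-flow on `X`: an antisymmetric function on darts whose values
generate `A` and which satisfies both Kirchhoff laws. -/
structure IsHarmonicFlow {A : Type} [AddCommGroup A] (ν : X.D → A) : Prop where
  antisym : ∀ x, ν (X.inv x) = - ν x
  gen : AddSubgroup.closure (Set.range ν) = ⊤
  klv : ∀ v, ∑ x ∈ X.dartsAt v, ν x = 0
  klc : ∀ {n : ℕ} (hn : 0 < n) (c : Fin n → X.D), X.IsCycleVec hn c →
    ∑ i, ν (c i) = 0

end Multigraph
namespace Multigraph

variable (X : Multigraph)

/-- The Laplacian of `X` acting on integer divisors (functions on vertices):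
`(Δ f) v = Σ_{x ∈ D_v} (f v - f (head of x))`, summing over darts with
multiplicity. -/
def lap : (X.V → ℤ) →+ (X.V → ℤ) :=
  AddMonoidHom.mk'
    (fun f v => ∑ x ∈ X.dartsAt v, (f v - f (X.vtx (X.inv x))))
    (by
      intro f g
      funext v
      simp only [Pi.add_apply]
      rw [← Finset.sum_add_distrib]
      exact Finset.sum_congr rfl fun x _ => by ring)

/-- The group of divisors of degree `0`. -/
def div0 : AddSubgroup (X.V → ℤ) where
  carrier := {f | ∑ v, f v = 0}
  zero_mem' := by simp
  add_mem' := by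
    intro a b ha hb
    simp only [Set.mem_setOf_eq, Pi.add_apply, Finset.sum_add_distrib] at *
    simp [ha, hb]
  neg_mem' := by
    intro a ha
    simp only [Set.mem_setOf_eq, Pi.neg_apply, Finset.sum_neg_distrib] at *
    simp [ha]

/-- The Jacobian (critical group) of `X` as divisors: the degree-zero divisors
modulo the image of the Laplacian, `Jac(X) = Div₀(X)/Δ(Div(X))`. -/
def jacDiv : Type := X.div0 ⧸ (X.lap.range.addSubgroupOf X.div0)

instance : AddCommGroup X.jacDiv :=
  QuotientAddGroup.Quotient.addCommGroup (X.lap.range.addSubgroupOf X.div0)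

end Multigraph

namespace Multigraph

variable {X : Multigraph}

/-- Walks in a multigraph, as lists of darts. -/
inductive Walk (X : Multigraph) : X.V → X.V → List X.D → Prop
  | nil (v) : Walk X v v []
  | cons (x : X.D) {v : X.V} {l : List X.D} (h : Walk X (X.vtx (X.inv x)) v l) :
      Walk X (X.vtx x) v (x :: l)

lemma Walk.append {u v w : X.V} {l m : List X.D} (h1 : Walk X u v l)
    (h2 : Walk X v w m) : Walk X u w (l ++ m) := by
  induction h1 with
  | nil => exact h2
  | cons x h ih => exact Walk.cons x (ih h2)

lemma walk_nil_eq {u v : X.V} (h : Walk X u v []) : u = v := by cases h; rfl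

lemma walk_head {u v : X.V} {x : X.D} {l : List X.D} (h : Walk X u v (x :: l)) :
    u = X.vtx x := by cases h; rfl

lemma walk_tail {u v : X.V} {x : X.D} {l : List X.D} (h : Walk X u v (x :: l)) :
    Walk X (X.vtx (X.inv x)) v l := by cases h; assumption

lemma walk_split {w : X.V} {m : List X.D} :
    ∀ {l : List X.D} {u : X.V}, Walk X u w (l ++ m) →
      ∃ v, Walk X u v l ∧ Walk X v w m := by
  intro l
  induction l with
  | nil => intro u h; exact ⟨u, Walk.nil u, h⟩
  | cons x l ih =>
    intro u h
    have hu : u = X.vtx x := walk_head h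
    obtain ⟨p, h1, h2⟩ := ih (walk_tail h)
    exact ⟨p, hu ▸ Walk.cons x h1, h2⟩

lemma walk_single (x : X.D) : Walk X (X.vtx x) (X.vtx (X.inv x)) [x] :=
  Walk.cons x (Walk.nil _)

lemma Walk.reverse {u v : X.V} {l : List X.D} (h : Walk X u v l) :
    Walk X v u (l.reverse.map X.inv) := by
  induction h with
  | nil v => exact Walk.nil v
  | cons x h ih =>
    have hx : Walk X (X.vtx (X.inv x)) (X.vtx x) [X.inv x] := by
      have := walk_single (X := X) (X.inv x)
      rwa [X.inv_inv x] at this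
    have := ih.append hx
    simpa using this

lemma walk_get_zero {u v : X.V} {l : List X.D} (h : Walk X u v l)
    (h0 : 0 < l.length) : u = X.vtx (l.get ⟨0, h0⟩) := by
  cases l with
  | nil => simp at h0
  | cons x l => exact walk_head h

lemma walk_get_succ {u v : X.V} :
    ∀ {l : List X.D}, Walk X u v l → ∀ i (h : i + 1 < l.length),
      X.vtx (X.inv (l.get ⟨i, Nat.lt_of_succ_lt h⟩)) = X.vtx (l.get ⟨i + 1, h⟩) := by
  intro l h
  induction h with
  | nil => intro i hi; simp at hi
  | cons x h ih =>
    intro i hi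
    cases i with
    | zero =>
      simp only [List.get]
      have h0 : 0 < _ := Nat.lt_of_succ_lt_succ hi
      exact (walk_get_zero h h0).symm ▸ (walk_get_zero h h0).symm
    | succ k =>
      simpa using ih k (Nat.lt_of_succ_lt_succ hi)

lemma walk_getLast {u v : X.V} {l : List X.D} (h : Walk X u v l) (hne : l ≠ []) :
    X.vtx (X.inv (l.getLast hne)) = v := by
  induction h with
  | nil => exact absurd rfl hne
  | cons x h ih =>
    rename_i l'
    cases l' with
    | nil => simp [List.getLast]; exact walk_nil_eq h
    | cons y m =>
      rw [List.getLast_cons (by simp)]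
      exact ih (by simp)

/-- The quotient map onto the Jacobian. -/
def jacMk (X : Multigraph) : FreeAbelianGroup X.D →+ X.jac :=
  QuotientAddGroup.mk' (AddSubgroup.closure X.jacRels)

lemma jacMk_rel {a : FreeAbelianGroup X.D} (h : a ∈ X.jacRels) : X.jacMk a = 0 :=
  (QuotientAddGroup.eq_zero_iff a).2 (AddSubgroup.subset_closure h)

lemma jflow_def (x : X.D) : X.jflow x = X.jacMk (FreeAbelianGroup.of x) := rfl

lemma jflow_inv (x : X.D) : X.jflow (X.inv x) = - X.jflow x := by
  have hmem : (FreeAbelianGroup.of x + FreeAbelianGroup.of (X.inv x)) ∈ X.jacRels := by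
    simp only [jacRels, Set.mem_union, Set.mem_setOf_eq]
    exact Or.inl (Or.inl ⟨x, rfl⟩)
  have h := jacMk_rel hmem
  rw [map_add] at h
  exact eq_neg_of_add_eq_zero_left (by rw [add_comm]; exact h)

lemma jflow_klv (v : X.V) : ∑ x ∈ X.dartsAt v, X.jflow x = 0 := by
  have hmem : (∑ x ∈ X.dartsAt v, FreeAbelianGroup.of x) ∈ X.jacRels := by
    simp only [jacRels, Set.mem_union, Set.mem_setOf_eq]
    exact Or.inl (Or.inr ⟨v, rfl⟩)
  have h := jacMk_rel hmem
  rwa [map_sum] at h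

lemma jflow_klc {n : ℕ} (hn : 0 < n) (c : Fin n → X.D) (hc : X.IsCycleVec hn c) :
    ∑ i, X.jflow (c i) = 0 := by
  have hmem : (∑ i, FreeAbelianGroup.of (c i)) ∈ X.jacRels := by
    simp only [jacRels, Set.mem_union, Set.mem_setOf_eq]
    exact Or.inr ⟨n, hn, c, hc, rfl⟩
  have h := jacMk_rel hmem
  rwa [map_sum] at h

lemma list_map_sum_eq_fin_sum {A : Type*} [AddCommMonoid A] (ν : X.D → A) (l : List X.D) :
    (l.map ν).sum = ∑ i : Fin l.length, ν (l.get i) := by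
  rw [← List.ofFn_getElem_eq_map, List.sum_ofFn]
  rfl

/-- The sum of a flow over any closed walk vanishes, provided the flow sums to
zero over every cycle. -/
lemma closed_walk_sum {A : Type*} [AddCommGroup A] (ν : X.D → A)
    (hklc : ∀ {n : ℕ} (hn : 0 < n) (c : Fin n → X.D), X.IsCycleVec hn c →
      ∑ i, ν (c i) = 0) :
    ∀ (n : ℕ) (l : List X.D) (v : X.V), l.length = n → Walk X v v l →
      (l.map ν).sum = 0 := by
  intro n
  induction n using Nat.strong_induction_on with
  | _ n ih =>
  intro l v hlen hw
  subst hlen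
  rcases Nat.eq_zero_or_pos l.length with h0 | hn
  · rw [List.length_eq_zero_iff] at h0; subst h0; simp
  by_cases hinj : Function.Injective fun i : Fin l.length => X.vtx (l.get i)
  · -- the walk is a cycle
    have hcyc : X.IsCycleVec hn l.get := by
      refine ⟨?_, hinj⟩
      intro i
      rcases Nat.lt_or_ge (i.1 + 1) l.length with hlt | hge
      · have hmod : (i.1 + 1) % l.length = i.1 + 1 := Nat.mod_eq_of_lt hlt
        have := walk_get_succ hw i.1 hlt
        convert this using 3 <;> simp [hmod]
      · have hieq : i.1 + 1 = l.length := by omega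
        have hmod : (i.1 + 1) % l.length = 0 := by rw [hieq, Nat.mod_self]
        have hne : l ≠ [] := by
          intro h; rw [h] at hn; simp at hn
        have h1 : X.vtx (X.inv (l.getLast hne)) = v := walk_getLast hw hne
        have h2 : v = X.vtx (l.get ⟨0, hn⟩) := walk_get_zero hw hn
        have h3 : l.getLast hne = l.get i := by
          rw [List.getLast_eq_getElem]
          congr 1
          omega
        rw [h3] at h1
        rw [h1, h2]
        congr 2
        simp [hmod]
    have := hklc hn l.get hcyc
    rw [list_map_sum_eq_fin_sum]
    exact this
  · -- a vertex repeats: split the walk into two shorter closed walks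
    rw [Function.not_injective_iff] at hinj
    obtain ⟨i, j, hlt, hv⟩ : ∃ i j : Fin l.length, i.1 < j.1 ∧
        X.vtx (l.get i) = X.vtx (l.get j) := by
      obtain ⟨a, b, hvab, hab⟩ := hinj
      rcases lt_or_gt_of_ne hab with h | h
      · exact ⟨a, b, Fin.lt_def.mp h, hvab⟩
      · exact ⟨b, a, Fin.lt_def.mp h, hvab.symm⟩
    have hil := i.isLt
    have hjl := j.isLt
    set a := l.take i.1 with ha
    set d := l.drop i.1 with hd
    have hl : l = a ++ d := (List.take_append_drop _ _).symm
    obtain ⟨p, hwa, hwd⟩ := walk_split (hl ▸ hw)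
    have hdlen : d.length = l.length - i.1 := by simp [hd]
    have hd0 : 0 < d.length := by omega
    have hp : p = X.vtx (d.get ⟨0, hd0⟩) := walk_get_zero hwd hd0
    have hdi : d.get ⟨0, hd0⟩ = l.get i := by
      simp only [hd, List.get_eq_getElem, List.getElem_drop]
      congr 1
    set k := j.1 - i.1 with hk
    set b := d.take k with hb
    set e := d.drop k with he
    have hd2 : d = b ++ e := (List.take_append_drop _ _).symm
    obtain ⟨q, hwb, hwe⟩ := walk_split (hd2 ▸ hwd)
    have helen : e.length = l.length - j.1 := by
      simp only [he, List.length_drop, hdlen]; omega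
    have he0 : 0 < e.length := by omega
    have hq : q = X.vtx (e.get ⟨0, he0⟩) := walk_get_zero hwe he0
    have hej : e.get ⟨0, he0⟩ = l.get j := by
      simp only [he, hd, List.get_eq_getElem, List.getElem_drop, List.drop_drop]
      congr 1
      omega
    have hqp : q = p := by rw [hq, hej, hp, hdi, hv]
    have hblen : b.length = k := by
      simp only [hb, List.length_take]; omega
    have halen : a.length = i.1 := by
      simp only [ha, List.length_take]; omega
    have hwb' : Walk X p p b := hqp ▸ hwb
    have hwae : Walk X v v (a ++ e) := hwa.append (hqp ▸ hwe)
    have s1 : (b.map ν).sum = 0 := ih b.length (by omega) b p rfl hwb'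
    have s2 : ((a ++ e).map ν).sum = 0 :=
      ih (a ++ e).length (by rw [List.length_append]; omega) _ v rfl hwae
    have hsum : (l.map ν).sum = (b.map ν).sum + ((a ++ e).map ν).sum := by
      rw [hl, hd2]
      simp only [List.map_append, List.sum_append]
      abel
    rw [hsum, s1, s2, add_zero]

lemma list_sum_map_neg {A : Type*} [AddCommGroup A] (f : X.D → A) (l : List X.D) :
    (l.map fun x => - f x).sum = - (l.map f).sum := by
  induction l with
  | nil => simp
  | cons x l ih => simp [ih]; abel

/-- Path independence of the canonical flow. -/
lemma walk_flow_indep {u v : X.V} {l m : List X.D} (hl : Walk X u v l)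
    (hm : Walk X u v m) : (l.map X.jflow).sum = (m.map X.jflow).sum := by
  have hclosed : Walk X u u (l ++ m.reverse.map X.inv) := hl.append hm.reverse
  have h0 := closed_walk_sum X.jflow (fun hn c hc => jflow_klc hn c hc) _ _ u rfl hclosed
  rw [List.map_append, List.sum_append] at h0
  have h1 : ((m.reverse.map X.inv).map X.jflow).sum = - (m.map X.jflow).sum := by
    rw [List.map_map]
    have : X.jflow ∘ X.inv = fun x => - X.jflow x := funext fun x => jflow_inv x
    rw [this, list_sum_map_neg, List.map_reverse, List.sum_reverse]
  rw [h1] at h0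
  exact add_neg_eq_zero.mp h0

lemma exists_walk (hconn : X.Connected) (u v : X.V) : ∃ l, Walk X u v l := by
  have h := hconn u v
  induction h with
  | refl => exact ⟨[], Walk.nil u⟩
  | tail hs hstep ih =>
    obtain ⟨l, hl⟩ := ih
    obtain ⟨x, -, hx1, hx2⟩ := hstep
    refine ⟨l ++ [x], hl.append ?_⟩
    rw [← hx1, ← hx2]
    exact walk_single x

/-- A base vertex. -/
noncomputable def basept (X : Multigraph) : X.V := X.vtx (Classical.arbitrary X.D)

open Classical in
/-- The potential of a vertex: the flow sum along some walk from the base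
vertex. -/
noncomputable def pot (X : Multigraph) (w : X.V) : X.jac :=
  if h : ∃ l, Walk X X.basept w l then ((Classical.choose h).map X.jflow).sum else 0

lemma pot_eq {w : X.V} {l : List X.D} (hl : Walk X X.basept w l) :
    X.pot w = (l.map X.jflow).sum := by
  unfold pot
  rw [dif_pos ⟨l, hl⟩]
  exact walk_flow_indep (Classical.choose_spec (⟨l, hl⟩ : ∃ l, Walk X X.basept w l)) hl

lemma pot_step (hconn : X.Connected) (x : X.D) :
    X.pot (X.vtx (X.inv x)) = X.pot (X.vtx x) + X.jflow x := by
  obtain ⟨l, hl⟩ := exists_walk hconn X.basept (X.vtx x)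
  have h2 : Walk X X.basept (X.vtx (X.inv x)) (l ++ [x]) := hl.append (walk_single x)
  rw [pot_eq hl, pot_eq h2]
  simp

/-- The indicator divisor of a vertex. -/
def dDiv (X : Multigraph) (v : X.V) : X.V → ℤ := fun w => if v = w then 1 else 0

/-- The boundary divisor of a dart. -/
def bDiv (X : Multigraph) (x : X.D) : X.V → ℤ :=
  dDiv X (X.vtx (X.inv x)) - dDiv X (X.vtx x)

lemma dDiv_sum (v : X.V) : ∑ w, dDiv X v w = 1 := by
  simp [dDiv]

lemma bDiv_mem (x : X.D) : X.bDiv x ∈ X.div0 := by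
  show ∑ v, X.bDiv x v = 0
  simp only [bDiv, Pi.sub_apply, Finset.sum_sub_distrib, dDiv_sum, sub_self]

/-- The boundary divisor of a dart, as an element of `div0`. -/
def bDiv0 (X : Multigraph) (x : X.D) : X.div0 := ⟨X.bDiv x, bDiv_mem x⟩

/-- The difference divisor `δ_v - δ_u` as an element of `div0`. -/
def dd (X : Multigraph) (u v : X.V) : X.div0 :=
  ⟨dDiv X v - dDiv X u, by
    show ∑ w, _ = 0
    simp only [Pi.sub_apply, Finset.sum_sub_distrib, dDiv_sum, sub_self]⟩

/-- The quotient map onto the divisor Jacobian. -/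
def jacDivMk (X : Multigraph) : X.div0 →+ X.jacDiv :=
  QuotientAddGroup.mk' (X.lap.range.addSubgroupOf X.div0)

lemma jacDivMk_eq_zero {z : X.div0} (h : (z : X.V → ℤ) ∈ X.lap.range) :
    X.jacDivMk z = 0 :=
  (QuotientAddGroup.eq_zero_iff z).2 (AddSubgroup.mem_addSubgroupOf.2 h)

lemma inv_bijective (X : Multigraph) : Function.Bijective X.inv :=
  Function.Involutive.bijective X.inv_inv

/-- The key counting identity: the vertex relation is the Laplacian of the
negative indicator divisor. -/
lemma lap_neg_dDiv (v : X.V) :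
    X.lap (fun w => - dDiv X v w) = ∑ x ∈ X.dartsAt v, X.bDiv x := by
  funext w
  have hL : X.lap (fun w => - dDiv X v w) w
      = ∑ x ∈ X.dartsAt w, (dDiv X v (X.vtx (X.inv x)) - dDiv X v w) := by
    show ∑ x ∈ X.dartsAt w, _ = _
    exact Finset.sum_congr rfl fun x _ => by ring
  have hR : (∑ x ∈ X.dartsAt v, X.bDiv x) w
      = ∑ x ∈ X.dartsAt v, (dDiv X (X.vtx (X.inv x)) w - dDiv X v w) := by
    rw [Finset.sum_apply]
    refine Finset.sum_congr rfl fun x hx => ?_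
    have hxv : X.vtx x = v := by simpa [dartsAt] using hx
    simp [bDiv, hxv]
  rw [hL, hR, Finset.sum_sub_distrib, Finset.sum_sub_distrib]
  congr 1
  · have h1 : ∑ x ∈ X.dartsAt w, dDiv X v (X.vtx (X.inv x))
        = ∑ x : X.D, if X.vtx x = w then dDiv X v (X.vtx (X.inv x)) else 0 := by
      rw [dartsAt, Finset.sum_filter]
    have h2 : ∑ x ∈ X.dartsAt v, dDiv X (X.vtx (X.inv x)) w
        = ∑ x : X.D, if X.vtx x = v then dDiv X (X.vtx (X.inv x)) w else 0 := by
      rw [dartsAt, Finset.sum_filter]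
    rw [h1, h2]
    rw [← Function.Bijective.sum_comp X.inv_bijective
      (fun x => if X.vtx x = w then dDiv X v (X.vtx (X.inv x)) else 0)]
    refine Finset.sum_congr rfl fun x _ => ?_
    rw [X.inv_inv]
    simp only [dDiv]
    by_cases ha : X.vtx (X.inv x) = w <;> by_cases hb : X.vtx x = v
    · simp [ha, hb]
    · simp [ha, if_neg hb, if_neg (fun h : v = X.vtx x => hb h.symm)]
    · simp [ha, hb, if_neg (fun h : X.vtx (X.inv x) = w => ha h)]
    · simp [ha, hb]
  · by_cases hvw : v = w
    · subst hvw; rfl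
    · simp [dDiv, hvw]

/-- The map to the divisor Jacobian on the free abelian group of darts. -/
def preToJacDiv (X : Multigraph) : FreeAbelianGroup X.D →+ X.jacDiv :=
  FreeAbelianGroup.lift (fun x => X.jacDivMk (X.bDiv0 x))

lemma preToJacDiv_of (x : X.D) :
    X.preToJacDiv (FreeAbelianGroup.of x) = X.jacDivMk (X.bDiv0 x) :=
  FreeAbelianGroup.lift_apply_of _ _

lemma preToJacDiv_rels : AddSubgroup.closure X.jacRels ≤ X.preToJacDiv.ker := by
  rw [AddSubgroup.closure_le]
  rintro a ha
  simp only [jacRels, Set.mem_union, Set.mem_setOf_eq] at ha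
  rw [SetLike.mem_coe, AddMonoidHom.mem_ker]
  rcases ha with (⟨x, rfl⟩ | ⟨v, rfl⟩) | ⟨n, hn, c, hc, rfl⟩
  · rw [map_add, preToJacDiv_of, preToJacDiv_of, ← map_add]
    have h0 : X.bDiv0 x + X.bDiv0 (X.inv x) = 0 := by
      apply Subtype.ext
      show X.bDiv x + X.bDiv (X.inv x) = 0
      simp only [bDiv, X.inv_inv]
      abel
    rw [h0, map_zero]
  · rw [map_sum]
    have : ∀ x ∈ X.dartsAt v, X.preToJacDiv (FreeAbelianGroup.of x)
        = X.jacDivMk (X.bDiv0 x) := fun x _ => preToJacDiv_of x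
    rw [Finset.sum_congr rfl this, ← map_sum]
    apply jacDivMk_eq_zero
    have hcoe : ((∑ x ∈ X.dartsAt v, X.bDiv0 x : X.div0) : X.V → ℤ)
        = ∑ x ∈ X.dartsAt v, X.bDiv x := by
      exact AddSubmonoidClass.coe_finset_sum _ _
    rw [hcoe, ← lap_neg_dDiv]
    exact ⟨_, rfl⟩
  · rw [map_sum]
    have : ∀ i ∈ Finset.univ, X.preToJacDiv (FreeAbelianGroup.of (c i))
        = X.jacDivMk (X.bDiv0 (c i)) := fun i _ => preToJacDiv_of (c i)
    rw [Finset.sum_congr rfl this, ← map_sum]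
    have h0 : ∑ i, X.bDiv0 (c i) = 0 := by
      apply Subtype.ext
      have hcoe : ((∑ i, X.bDiv0 (c i) : X.div0) : X.V → ℤ) = ∑ i, X.bDiv (c i) :=
        AddSubmonoidClass.coe_finset_sum _ _
      rw [hcoe]
      show ∑ i, X.bDiv (c i) = 0
      set e : Fin n → Fin n := fun i => ⟨(i.1 + 1) % n, Nat.mod_lt _ hn⟩ with hedef
      have hmod : ∀ m : ℕ, m < n → (m + 1) % n = if m + 1 = n then 0 else m + 1 := by
        intro m hm
        split
        · next h => rw [h, Nat.mod_self]
        · next h => exact Nat.mod_eq_of_lt (by omega)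
      have hebij : Function.Bijective e := by
        rw [Fintype.bijective_iff_injective_and_card]
        refine ⟨fun a b hab => ?_, rfl⟩
        have ha' : (a.1 + 1) % n = (b.1 + 1) % n := congrArg Fin.val hab
        rw [hmod a.1 a.isLt, hmod b.1 b.isLt] at ha'
        apply Fin.ext
        split at ha' <;> split at ha' <;> omega
      have hstep : ∀ i, X.bDiv (c i)
          = dDiv X (X.vtx (c (e i))) - dDiv X (X.vtx (c i)) := fun i => by
        rw [bDiv, hc.1 i]
      calc ∑ i, X.bDiv (c i)
          = ∑ i, (dDiv X (X.vtx (c (e i))) - dDiv X (X.vtx (c i))) :=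
            Finset.sum_congr rfl fun i _ => hstep i
        _ = ∑ i, dDiv X (X.vtx (c (e i))) - ∑ i, dDiv X (X.vtx (c i)) :=
            Finset.sum_sub_distrib _ _
        _ = 0 := by
            rw [Function.Bijective.sum_comp hebij (fun i => dDiv X (X.vtx (c i)))]
            exact sub_self _
    rw [h0, map_zero]

/-- The canonical map from the Jacobian to the divisor Jacobian. -/
def toJacDiv (X : Multigraph) : X.jac →+ X.jacDiv :=
  QuotientAddGroup.lift _ X.preToJacDiv preToJacDiv_rels

lemma toJacDiv_jflow (x : X.D) :
    X.toJacDiv (X.jflow x) = X.jacDivMk (X.bDiv0 x) := by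
  show X.preToJacDiv (FreeAbelianGroup.of x) = _
  exact preToJacDiv_of x

/-- The potential-summing map on divisors. -/
noncomputable def theta (X : Multigraph) : (X.V → ℤ) →+ X.jac :=
  AddMonoidHom.mk' (fun f => ∑ w, f w • X.pot w) (fun f g => by
    simp only [Pi.add_apply, add_smul, Finset.sum_add_distrib])

lemma theta_apply (f : X.V → ℤ) : X.theta f = ∑ w, f w • X.pot w := rfl

lemma theta_dDiv (v : X.V) : X.theta (dDiv X v) = X.pot v := by
  rw [theta_apply]
  simp [dDiv, ite_smul, Finset.sum_ite_eq]

lemma theta_lap (hconn : X.Connected) (f : X.V → ℤ) : X.theta (X.lap f) = 0 := by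
  have hfib : ∀ (M : Type) (_ : AddCommMonoid M) (g : X.D → M),
      ∑ w, ∑ x ∈ X.dartsAt w, g x = ∑ x, g x := by
    intro M _ g
    exact Finset.sum_fiberwise Finset.univ X.vtx g
  have step1 : X.theta (X.lap f)
      = ∑ x : X.D, (f (X.vtx x) - f (X.vtx (X.inv x))) • X.pot (X.vtx x) := by
    rw [theta_apply,
      ← hfib _ _ (fun x => (f (X.vtx x) - f (X.vtx (X.inv x))) • X.pot (X.vtx x))]
    refine Finset.sum_congr rfl fun w _ => ?_
    have hl : X.lap f w = ∑ x ∈ X.dartsAt w, (f w - f (X.vtx (X.inv x))) := rfl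
    rw [hl, Finset.sum_smul]
    refine Finset.sum_congr rfl fun x hx => ?_
    have hxw : X.vtx x = w := by simpa [dartsAt] using hx
    rw [hxw]
  have step2 : ∑ x : X.D, f (X.vtx (X.inv x)) • X.pot (X.vtx x)
      = ∑ x : X.D, f (X.vtx x) • X.pot (X.vtx x)
        + ∑ x : X.D, f (X.vtx x) • X.jflow x := by
    rw [← Function.Bijective.sum_comp X.inv_bijective
      (fun x => f (X.vtx (X.inv x)) • X.pot (X.vtx x))]
    simp only [X.inv_inv]
    rw [← Finset.sum_add_distrib]
    refine Finset.sum_congr rfl fun x _ => ?_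
    rw [pot_step hconn x, smul_add]
  have step3 : ∑ x : X.D, f (X.vtx x) • X.jflow x = 0 := by
    rw [← hfib _ _ (fun x => f (X.vtx x) • X.jflow x)]
    refine Finset.sum_eq_zero fun w _ => ?_
    have hcongr : ∑ x ∈ X.dartsAt w, f (X.vtx x) • X.jflow x
        = ∑ x ∈ X.dartsAt w, f w • X.jflow x :=
      Finset.sum_congr rfl fun x hx => by
        rw [show X.vtx x = w by simpa [dartsAt] using hx]
    rw [hcongr, ← Finset.smul_sum, jflow_klv, smul_zero]
  rw [step1]
  simp only [sub_smul]
  rw [Finset.sum_sub_distrib, step2, step3, add_zero, sub_self]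

/-- The inverse map, from the divisor Jacobian to the Jacobian. -/
noncomputable def fromJacDiv (X : Multigraph) (hconn : X.Connected) :
    X.jacDiv →+ X.jac :=
  QuotientAddGroup.lift _ (X.theta.comp X.div0.subtype) (by
    intro z hz
    rw [AddMonoidHom.mem_ker, AddMonoidHom.comp_apply]
    obtain ⟨f, hf⟩ := AddSubgroup.mem_addSubgroupOf.1 hz
    show X.theta (z : X.V → ℤ) = 0
    exact hf ▸ theta_lap hconn f)

lemma fromJacDiv_mk (hconn : X.Connected) (z : X.div0) :
    X.fromJacDiv hconn (X.jacDivMk z) = X.theta (z : X.V → ℤ) := rfl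

lemma toJacDiv_walk {u v : X.V} {l : List X.D} (h : Walk X u v l) :
    X.toJacDiv (l.map X.jflow).sum = X.jacDivMk (X.dd u v) := by
  induction h with
  | nil v =>
    simp only [List.map_nil, List.sum_nil, map_zero]
    have h0 : X.dd v v = 0 := Subtype.ext (sub_self _)
    rw [h0, map_zero]
  | cons x h ih =>
    simp only [List.map_cons, List.sum_cons, map_add]
    rw [toJacDiv_jflow, ih, ← map_add]
    congr 1
    apply Subtype.ext
    show X.bDiv x + (dDiv X _ - dDiv X _) = dDiv X _ - dDiv X _
    rw [bDiv]
    abel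

lemma toJacDiv_pot (hconn : X.Connected) (w : X.V) :
    X.toJacDiv (X.pot w) = X.jacDivMk (X.dd X.basept w) := by
  obtain ⟨l, hl⟩ := exists_walk hconn X.basept w
  rw [pot_eq hl, toJacDiv_walk hl]

lemma sum_smul_dDiv (f : X.V → ℤ) : ∑ w, f w • dDiv X w = f := by
  funext u
  rw [Finset.sum_apply]
  simp only [Pi.smul_apply, dDiv, smul_eq_mul, mul_ite, mul_one, mul_zero]
  rw [Finset.sum_ite_eq' Finset.univ u f]
  simp

lemma right_inv_aux (hconn : X.Connected) (z : X.jacDiv) :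
    X.toJacDiv (X.fromJacDiv hconn z) = z := by
  refine QuotientAddGroup.induction_on z (fun z => ?_)
  show X.toJacDiv (X.fromJacDiv hconn (X.jacDivMk z)) = X.jacDivMk z
  rw [fromJacDiv_mk, theta_apply, map_sum]
  have h1 : ∀ w ∈ Finset.univ, X.toJacDiv ((z : X.V → ℤ) w • X.pot w)
      = (z : X.V → ℤ) w • X.jacDivMk (X.dd X.basept w) := fun w _ => by
    rw [map_zsmul, toJacDiv_pot hconn]
  rw [Finset.sum_congr rfl h1]
  have h2 : ∑ w, (z : X.V → ℤ) w • X.jacDivMk (X.dd X.basept w)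
      = X.jacDivMk (∑ w, (z : X.V → ℤ) w • X.dd X.basept w) := by
    rw [map_sum]
    exact Finset.sum_congr rfl fun w _ => (map_zsmul _ _ _).symm
  rw [h2]
  congr 1
  apply Subtype.ext
  have hval : ((∑ w, (z : X.V → ℤ) w • X.dd X.basept w : X.div0) : X.V → ℤ)
      = ∑ w, (z : X.V → ℤ) w • ((X.dd X.basept w : X.V → ℤ)) := by
    rw [AddSubmonoidClass.coe_finset_sum]
    exact Finset.sum_congr rfl fun w _ => rfl
  rw [hval]
  show ∑ w, (z : X.V → ℤ) w • (dDiv X w - dDiv X X.basept) = (z : X.V → ℤ)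
  simp only [smul_sub]
  rw [Finset.sum_sub_distrib, sum_smul_dDiv, ← Finset.sum_smul]
  have hz : ∑ w, (z : X.V → ℤ) w = 0 := z.2
  rw [hz, zero_smul, sub_zero]

lemma left_inv_aux (hconn : X.Connected) (a : X.jac) :
    X.fromJacDiv hconn (X.toJacDiv a) = a := by
  refine QuotientAddGroup.induction_on a (fun b => ?_)
  show X.fromJacDiv hconn (X.toJacDiv (X.jacMk b)) = X.jacMk b
  refine FreeAbelianGroup.induction_on b ?_ ?_ ?_ ?_
  · simp only [map_zero]
  · intro x
    show X.fromJacDiv hconn (X.toJacDiv (X.jflow x)) = X.jflow x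
    rw [toJacDiv_jflow, fromJacDiv_mk]
    show X.theta (X.bDiv x) = X.jflow x
    rw [bDiv, map_sub, theta_dDiv, theta_dDiv, pot_step hconn]
    abel
  · intro x hx
    rw [map_neg, map_neg, map_neg, hx]
  · intro x y hx hy
    rw [map_add, map_add, map_add, hx, hy]

end Multigraph

/-- For a connected graph `X`, the Jacobian — the universal abelian group
admitting a harmonic flow on `X` — is isomorphic to `Div₀(X)/Δ(Div(X))`, the
degree-zero divisors modulo the image of the Laplacian. -/
theorem jac_equiv_jacDiv (X : Multigraph) (hconn : X.Connected) :
    Nonempty (X.jac ≃+ X.jacDiv) := by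
  exact ⟨{ toFun := X.toJacDiv
           invFun := X.fromJacDiv hconn
           left_inv := Multigraph.left_inv_aux hconn
           right_inv := Multigraph.right_inv_aux hconn
           map_add' := fun a b => map_add X.toJacDiv a b }⟩
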